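/- arXiv:2207.10382 — 4 statements merged into one kernel-verified Lean document; each statement's English description precedes it below -/
import Mathlib

section
/- Let A be a commutative ring, π ∈ A, q ≥ 1 an integer, Ψ : A → A a ring homomorphism with Ψ(π) = π, and ∂ : A → A any map such that Ψ(a) = a^q + π·∂(a) for all a ∈ A. Let n ≥ 2 and let x_0, x_1, …, x_n ∈ A satisfy Ψ^m(x_0) = Σ_{i=0}^{m} π^i · x_i^{q^{m−i}} for both m = n−1 and m = n (Ψ^m denoting the m-fold iterate). Then π^n·x_n = π^n·∂(x_{n−1}) + Σ_{i=0}^{n−2} Σ_{j=1}^{q^{n−1−i}} π^{i+j} · C(q^{n−1−i}, j) · x_i^{q·(q^{n−1−i}−j)} · (∂(x_i))^j, where C(m, j) denotes the binomial coefficient. -/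
/-!
Applying `Ψ` to the ghost identity at level `n - 1` (using `Ψ π = π` and `Ψ a = a ^ q + π * d a`)
writes `Ψ^[n] (x 0)` as `∑_{i<n} π^i (x_i^q + π d(x_i))^{q^{n-1-i}}`. Expanding binomially, the
`j = 0` terms are the first `n` terms of the level-`n` ghost sum, so the remaining terms equal
`π^n x_n`; among them, the `i = n - 1` term is `π^n d(x_{n-1})`.
-/

open Finset

theorem add_pow_eq_pow_add_sum_Icc {R : Type*} [CommSemiring R] (a c : R) (m : ℕ) :
    (a + c) ^ m = a ^ m + ∑ j ∈ Icc 1 m, c ^ j * a ^ (m - j) * (m.choose j : R) := by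
  rw [add_comm a, add_pow, range_eq_Ico, sum_eq_sum_Ico_succ_bot m.succ_pos, Nat.succ_eq_add_one,
    Ico_add_one_right_eq_Icc]
  simp

theorem map_sum_pow_mul_pow_of_map_eq_self {A : Type*} [CommSemiring A] (Ψ : A →+* A) {π : A}
    (hΨπ : Ψ π = π) (s : Finset ℕ) (x : ℕ → A) (e : ℕ → ℕ) :
    Ψ (∑ i ∈ s, π ^ i * x i ^ e i) = ∑ i ∈ s, π ^ i * Ψ (x i) ^ e i := by
  simp only [map_sum, map_mul, map_pow, hΨπ]

theorem pow_mul_pow_add_mul_pow_pow_eq {A : Type*} [CommSemiring A] (π a b : A) (q i k : ℕ) :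
    π ^ i * (a ^ q + π * b) ^ q ^ k = π ^ i * a ^ q ^ (k + 1) +
      ∑ j ∈ Icc 1 (q ^ k), π ^ (i + j) * ((q ^ k).choose j : A) * a ^ (q * (q ^ k - j)) * b ^ j := by
  rw [add_pow_eq_pow_add_sum_Icc, mul_add, mul_sum, ← pow_mul, ← pow_succ']
  congr 1
  refine sum_congr rfl fun j _ => ?_
  rw [mul_pow, ← pow_mul]
  ring

theorem stmt_0_general {A : Type*} [CommRing A] (π : A) (q : ℕ)
    (Ψ : A →+* A) (hΨπ : Ψ π = π) (d : A → A)
    (hΨ : ∀ a : A, Ψ a = a ^ q + π * d a)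
    (n : ℕ) (hn : 2 ≤ n) (x : ℕ → A)
    (hg1 : (⇑Ψ)^[n - 1] (x 0) = ∑ i ∈ Finset.range n, π ^ i * x i ^ q ^ (n - 1 - i))
    (hg2 : (⇑Ψ)^[n] (x 0) = ∑ i ∈ Finset.range (n + 1), π ^ i * x i ^ q ^ (n - i)) :
    π ^ n * x n = π ^ n * d (x (n - 1)) +
      ∑ i ∈ Finset.range (n - 1), ∑ j ∈ Finset.Icc 1 (q ^ (n - 1 - i)),
        π ^ (i + j) * ((q ^ (n - 1 - i)).choose j : A) *
          x i ^ (q * (q ^ (n - 1 - i) - j)) * d (x i) ^ j := by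
  obtain ⟨m, rfl⟩ : ∃ m, n = m + 1 := ⟨n - 1, by omega⟩
  simp only [Nat.add_sub_cancel] at hg1 ⊢
  have hΨ_iterate : (⇑Ψ)^[m + 1] (x 0) = ∑ i ∈ range (m + 1), π ^ i * x i ^ q ^ (m + 1 - i) +
      ∑ i ∈ range (m + 1), ∑ j ∈ Icc 1 (q ^ (m - i)), π ^ (i + j) * ((q ^ (m - i)).choose j : A) *
        x i ^ (q * (q ^ (m - i) - j)) * d (x i) ^ j := by
    rw [Function.iterate_succ_apply', hg1, map_sum_pow_mul_pow_of_map_eq_self Ψ hΨπ,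
      ← sum_add_distrib]
    refine sum_congr rfl fun i hi => ?_
    rw [hΨ, pow_mul_pow_add_mul_pow_pow_eq, ← Nat.sub_add_comm (mem_range_succ_iff.mp hi)]
  rw [hg2, sum_range_succ _ (m + 1), Nat.sub_self, pow_zero, pow_one] at hΨ_iterate
  rw [add_left_cancel hΨ_iterate, sum_range_succ, add_comm]
  simp

/-- Lemma A.1 (l.coord1): the recursion for coordinates of a prolongation sequence
satisfying the ghost condition `Ψ^m(x₀) = ∑ π^i x_i^{q^{m-i}}`. -/
theorem stmt_0 {A : Type*} [CommRing A] (π : A) (q : ℕ) (hq : 1 ≤ q)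
    (Ψ : A →+* A) (hΨπ : Ψ π = π) (d : A → A)
    (hΨ : ∀ a : A, Ψ a = a ^ q + π * d a)
    (n : ℕ) (hn : 2 ≤ n) (x : ℕ → A)
    (hg1 : (⇑Ψ)^[n - 1] (x 0) = ∑ i ∈ Finset.range n, π ^ i * x i ^ q ^ (n - 1 - i))
    (hg2 : (⇑Ψ)^[n] (x 0) = ∑ i ∈ Finset.range (n + 1), π ^ i * x i ^ q ^ (n - i)) :
    π ^ n * x n = π ^ n * d (x (n - 1)) +
      ∑ i ∈ Finset.range (n - 1), ∑ j ∈ Finset.Icc 1 (q ^ (n - 1 - i)),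
        π ^ (i + j) * ((q ^ (n - 1 - i)).choose j : A) *
          x i ^ (q * (q ^ (n - 1 - i) - j)) * d (x i) ^ j :=
  stmt_0_general π q Ψ hΨπ d hΨ n hn x hg1 hg2
end

section
/- Fix a commutative ring R, a nonzerodivisor π ∈ R, and integers q ≥ 2, r ≥ 1. Let B be the polynomial ring over R in the variables x_{i,j} (i ∈ ℕ, 1 ≤ j ≤ r) and, for each n, let B_n ⊆ B denote the R-subalgebra generated by {x_{i,j} : 0 ≤ i ≤ n, 1 ≤ j ≤ r}. Let ∂ : B → B be a map such that: ∂(1) = 0; ∂ maps the image of R in B into itself; π·∂(a+b) = π·∂(a) + π·∂(b) + (a^q + b^q − (a+b)^q) and ∂(ab) = a^q·∂(b) + b^q·∂(a) + π·∂(a)·∂(b) for all a, b ∈ B; ∂(B_n) ⊆ B_{n+1} for every n; and the associated Frobenius lift Ψ(b) := b^q + π·∂(b) satisfies Ψ(π·1) = π·1. Assume the ghost condition: for all n ≥ 0 and all j, Ψ^n(x_{0,j}) = Σ_{i=0}^n π^i · x_{i,j}^{q^{n−i}}. Then for every n ≥ 0 the family {∂^i(x_{0,j}) : 0 ≤ i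 ≤ n, 1 ≤ j ≤ r} is algebraically independent over R, and the R-subalgebra of B it generates equals B_n. -/
/-!
Write `B_n` for the polynomials in the `x_{i,j}` with `i ≤ n`. Applying `Ψ` to the ghost identity
for `n` and comparing with the one for `n + 1` shows `π^{n+1} (∂ x_{n,j} - x_{n+1,j}) ∈ B_n`, so
`∂ x_{n,j} ≡ x_{n+1,j}` modulo `B_n` because `π` is a nonzerodivisor. Since `∂` is additive up to a
`π`-divisible defect, induction gives `∂^i x_{0,j} ≡ x_{i,j}` modulo `B_{i-1}`: the substitution
`x_{i,j} ↦ ∂^i x_{0,j}` is unitriangular. Solving a triangular system level by level shows that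
such a substitution maps each `B_n` onto itself and has a unitriangular right inverse; that inverse
is again surjective, so the substitution is injective.
-/

open MvPolynomial

namespace MvPolynomial

variable {R σ : Type*} [CommRing R]

theorem X_mem_supported_of_mem {s : Set σ} {p : σ} (hp : p ∈ s) : X p ∈ supported R s :=
  Algebra.subset_adjoin ⟨p, hp, rfl⟩

theorem mem_supported_of_C_mul_mem {a : R} (ha : IsLeftRegular a) {s : Set σ}
    {f : MvPolynomial σ R} (h : C a * f ∈ supported R s) : f ∈ supported R s := by
  rw [mem_supported] at h ⊢
  refine subset_trans (fun v hv => ?_) h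
  obtain ⟨m, hm, hvm⟩ := (mem_vars_iff_mem_support v).1 hv
  refine (mem_vars_iff_mem_support v).2 ⟨m, ?_, hvm⟩
  rw [mem_support_iff] at hm ⊢
  rw [coeff_C_mul]
  exact fun h0 => hm (ha (h0.trans (mul_zero a).symm))

theorem piDeriv_add_sub_mem_supported {π : R} (hπ : IsLeftRegular π) {q : ℕ}
    {d : MvPolynomial σ R → MvPolynomial σ R}
    (hadd : ∀ a b, C π * d (a + b) = C π * d a + C π * d b + (a ^ q + b ^ q - (a + b) ^ q))
    {s : Set σ} {a b : MvPolynomial σ R} (ha : a ∈ supported R s) (hb : b ∈ supported R s) :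
    d (a + b) - d a - d b ∈ supported R s := by
  refine mem_supported_of_C_mul_mem hπ ?_
  rw [show C π * (d (a + b) - d a - d b) = a ^ q + b ^ q - (a + b) ^ q by
    linear_combination hadd a b]
  exact sub_mem (add_mem (pow_mem ha q) (pow_mem hb q)) (pow_mem (add_mem ha hb) q)

def IsUnitriangular (rk : σ → ℕ) (y : σ → MvPolynomial σ R) : Prop :=
  ∀ p, y p - X p ∈ supported R {q | rk q < rk p}

namespace IsUnitriangular

variable {rk : σ → ℕ} {y : σ → MvPolynomial σ R}

theorem adjoin_image_eq_supported (hy : IsUnitriangular rk y) {s : Set σ}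
    (hs : ∀ p ∈ s, ∀ q, rk q < rk p → q ∈ s) :
    Algebra.adjoin R (y '' s) = supported R s := by
  have hbelow : ∀ p ∈ s, supported R {q | rk q < rk p} ≤ supported R s :=
    fun p hp => supported_mono fun q hq => hs p hp q hq
  apply le_antisymm
  · refine Algebra.adjoin_le ?_
    rintro _ ⟨p, hp, rfl⟩
    rw [SetLike.mem_coe, ← sub_add_cancel (y p) (X p)]
    exact add_mem (hbelow p hp (hy p)) (X_mem_supported_of_mem hp)
  · have hX : ∀ k, ∀ p ∈ s, rk p = k → X p ∈ Algebra.adjoin R (y '' s) := by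
      intro k
      induction k using Nat.strong_induction_on with
      | _ k ih =>
        rintro p hp rfl
        have hlower : supported R {q | rk q < rk p} ≤ Algebra.adjoin R (y '' s) :=
          Algebra.adjoin_le <| by
            rintro _ ⟨q, hq, rfl⟩
            exact ih _ hq q (hs p hp q hq) rfl
        rw [← sub_sub_cancel (y p) (X p)]
        exact sub_mem (Algebra.subset_adjoin ⟨p, hp, rfl⟩) (hlower (hy p))
    exact Algebra.adjoin_le <| by
      rintro _ ⟨p, hp, rfl⟩
      exact hX _ p hp rfl

theorem surjective_aeval (hy : IsUnitriangular rk y) : Function.Surjective (aeval (R := R) y) := by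
  rw [← AlgHom.range_eq_top, aeval_range, ← Set.image_univ,
    hy.adjoin_image_eq_supported fun _ _ _ _ => Set.mem_univ _, supported_univ]

theorem exists_rightInverse (hy : IsUnitriangular rk y) :
    ∃ w : σ → MvPolynomial σ R, IsUnitriangular rk w ∧ ∀ p, aeval y (w p) = X p := by
  have hpre : ∀ p, ∃ g ∈ supported R {q | rk q < rk p}, aeval y g = y p - X p := by
    intro p
    have hs : ∀ p' ∈ {q | rk q < rk p}, ∀ q, rk q < rk p' → q ∈ {q | rk q < rk p} :=
      fun _ hp' _ hq => lt_trans hq hp'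
    rw [← Subalgebra.mem_map, supported_eq_adjoin_X, ← Algebra.adjoin_image, Set.image_image]
    simpa only [aeval_X, hy.adjoin_image_eq_supported hs] using hy p
  choose g hg hgy using hpre
  refine ⟨fun p => X p - g p, fun p => ?_, fun p => ?_⟩
  · rw [sub_sub_cancel_left]
    exact neg_mem (hg p)
  · rw [map_sub, aeval_X, hgy, sub_sub_cancel]

theorem algebraicIndependent (hy : IsUnitriangular rk y) : AlgebraicIndependent R y := by
  obtain ⟨w, hw, hyw⟩ := hy.exists_rightInverse
  have hcomp : (aeval y).comp (aeval w) = AlgHom.id R (MvPolynomial σ R) :=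
    algHom_ext fun p => by rw [AlgHom.comp_apply, aeval_X, hyw]; rfl
  have hinv : Function.LeftInverse (aeval y) (aeval (R := R) w) := AlgHom.congr_fun hcomp
  exact (hinv.rightInverse_of_surjective hw.surjective_aeval).injective

end IsUnitriangular

end MvPolynomial

section FrobeniusLift

variable {B : Type*} [CommRing B]

def frobeniusLift (ϖ : B) (q : ℕ) (d : B → B) (hd1 : d 1 = 0)
    (hadd : ∀ a b, ϖ * d (a + b) = ϖ * d a + ϖ * d b + (a ^ q + b ^ q - (a + b) ^ q))
    (hmul : ∀ a b, d (a * b) = a ^ q * d b + b ^ q * d a + ϖ * d a * d b) : B →+* B :=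
  RingHom.mk'
    { toFun := fun b => b ^ q + ϖ * d b
      map_one' := by simp [hd1]
      map_mul' := fun a b => by simp only [hmul]; ring }
    fun a b => show (a + b) ^ q + ϖ * d (a + b) = (a ^ q + ϖ * d a) + (b ^ q + ϖ * d b) by
      linear_combination hadd a b

theorem sum_map_eq_ghost_succ {Ψ : B →+* B} {ϖ : B} (hΨϖ : Ψ ϖ = ϖ) {q : ℕ} {x₀ : B}
    {x : ℕ → B}
    (hghost : ∀ n, Ψ^[n] x₀ = ∑ i ∈ Finset.range (n + 1), ϖ ^ i * x i ^ q ^ (n - i)) (m : ℕ) :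
    ∑ i ∈ Finset.range (m + 1), ϖ ^ i * Ψ (x i) ^ q ^ (m - i) =
      ∑ i ∈ Finset.range (m + 1 + 1), ϖ ^ i * x i ^ q ^ (m + 1 - i) := by
  rw [← hghost, Function.iterate_succ_apply', hghost, map_sum]
  simp only [map_mul, map_pow, hΨϖ]

end FrobeniusLift

section PiDerivation

variable {R ι : Type*} [CommRing R] {π : R} {q : ℕ}
  {d : MvPolynomial (ℕ × ι) R → MvPolynomial (ℕ × ι) R}

theorem adjoin_X_le_eq_supported (n : ℕ) :
    Algebra.adjoin R {P : MvPolynomial (ℕ × ι) R | ∃ i ≤ n, ∃ j : ι, P = X (i, j)} =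
      supported R {p : ℕ × ι | p.1 ≤ n} := by
  rw [supported_eq_adjoin_X]
  congr 1
  ext P
  constructor
  · rintro ⟨i, hi, j, rfl⟩
    exact ⟨(i, j), hi, rfl⟩
  · rintro ⟨p, hp, rfl⟩
    exact ⟨p.1, hp, p.2, rfl⟩

theorem supported_fst_le_mono {m n : ℕ} (h : m ≤ n) :
    supported R {p : ℕ × ι | p.1 ≤ m} ≤ supported R {p : ℕ × ι | p.1 ≤ n} :=
  supported_mono fun _ hp => le_trans hp h

theorem X_mem_supported_fst_le {i n : ℕ} (h : i ≤ n) (j : ι) :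
    X (i, j) ∈ supported R {p : ℕ × ι | p.1 ≤ n} :=
  X_mem_supported_of_mem h

theorem piDeriv_X_sub_X_succ_mem_supported (hπ : IsLeftRegular π)
    {Ψ : MvPolynomial (ℕ × ι) R →+* MvPolynomial (ℕ × ι) R} (hΨ : ∀ b, Ψ b = b ^ q + C π * d b)
    (hΨπ : Ψ (C π) = C π)
    (hstep : ∀ n, ∀ a ∈ supported R {p : ℕ × ι | p.1 ≤ n},
      d a ∈ supported R {p : ℕ × ι | p.1 ≤ n + 1})
    {j : ι} (hghost : ∀ n, Ψ^[n] (X (0, j)) =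
      ∑ i ∈ Finset.range (n + 1), C π ^ i * X (i, j) ^ q ^ (n - i)) (m : ℕ) :
    d (X (m, j)) - X (m + 1, j) ∈ supported R {p : ℕ × ι | p.1 ≤ m} := by
  have hghost_succ := sum_map_eq_ghost_succ hΨπ (x := fun i => X (i, j)) hghost m
  simp only [Finset.sum_range_succ _ m, Finset.sum_range_succ _ (m + 1), hΨ (X (m, j)),
    Nat.sub_self, Nat.add_sub_cancel_left, pow_zero, pow_one] at hghost_succ
  have hΨX : ∀ i < m, Ψ (X (i, j)) ∈ supported R {p : ℕ × ι | p.1 ≤ m} := by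
    intro i hi
    have hdX := hstep i (X (i, j)) (X_mem_supported_fst_le le_rfl j)
    rw [hΨ]
    exact add_mem (pow_mem (X_mem_supported_fst_le hi.le j) q)
      (mul_mem (Subalgebra.algebraMap_mem _ π) (supported_fst_le_mono hi hdX))
  refine mem_supported_of_C_mul_mem (hπ.pow (m + 1)) ?_
  rw [map_pow, show C π ^ (m + 1) * (d (X (m, j)) - X (m + 1, j)) =
      ∑ i ∈ Finset.range m, (C π ^ i * X (i, j) ^ q ^ (m + 1 - i) -
        C π ^ i * Ψ (X (i, j)) ^ q ^ (m - i)) by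
    rw [Finset.sum_sub_distrib]
    linear_combination hghost_succ]
  refine Subalgebra.sum_mem _ fun i hi => ?_
  have hi : i < m := Finset.mem_range.1 hi
  have hπi : C π ^ i ∈ supported R {p : ℕ × ι | p.1 ≤ m} :=
    pow_mem (Subalgebra.algebraMap_mem _ π) i
  exact sub_mem (mul_mem hπi (pow_mem (X_mem_supported_fst_le hi.le j) _))
    (mul_mem hπi (pow_mem (hΨX i hi) _))

theorem iterate_piDeriv_X_sub_X_mem_supported (hπ : IsLeftRegular π)
    (hadd : ∀ a b, C π * d (a + b) = C π * d a + C π * d b + (a ^ q + b ^ q - (a + b) ^ q))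
    (hstep : ∀ n, ∀ a ∈ supported R {p : ℕ × ι | p.1 ≤ n},
      d a ∈ supported R {p : ℕ × ι | p.1 ≤ n + 1})
    (hX : ∀ m j, d (X (m, j)) - X (m + 1, j) ∈ supported R {p : ℕ × ι | p.1 ≤ m})
    (j : ι) (i : ℕ) :
    d^[i + 1] (X (0, j)) - X (i + 1, j) ∈ supported R {p : ℕ × ι | p.1 ≤ i} := by
  induction i with
  | zero => simpa using hX 0 j
  | succ i ih =>
    set h := d^[i + 1] (X (0, j)) - X (i + 1, j)
    rw [Function.iterate_succ_apply', ← sub_add_cancel (d^[i + 1] (X (0, j))) (X (i + 1, j)),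
      show d (h + X (i + 1, j)) - X (i + 1 + 1, j) =
        (d (X (i + 1, j)) - X (i + 1 + 1, j)) + d h +
          (d (h + X (i + 1, j)) - d h - d (X (i + 1, j))) by ring]
    exact add_mem (add_mem (hX (i + 1) j) (hstep i h ih))
      (piDeriv_add_sub_mem_supported hπ hadd (supported_fst_le_mono i.le_succ ih)
        (X_mem_supported_fst_le le_rfl j))

end PiDerivation

theorem stmt_1_general {R : Type*} [CommRing R] (π : R)
    (hπ : ∀ a : R, π * a = 0 → a = 0)
    (q r : ℕ)
    (d : MvPolynomial (ℕ × Fin r) R → MvPolynomial (ℕ × Fin r) R)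
    (hd1 : d 1 = 0)
    (hadd : ∀ a b : MvPolynomial (ℕ × Fin r) R,
      MvPolynomial.C π * d (a + b) =
        MvPolynomial.C π * d a + MvPolynomial.C π * d b + (a ^ q + b ^ q - (a + b) ^ q))
    (hmul : ∀ a b : MvPolynomial (ℕ × Fin r) R,
      d (a * b) = a ^ q * d b + b ^ q * d a + MvPolynomial.C π * d a * d b)
    (hstep : ∀ n : ℕ, ∀ a ∈ Algebra.adjoin R
        {P : MvPolynomial (ℕ × Fin r) R | ∃ i ≤ n, ∃ j : Fin r, P = MvPolynomial.X (i, j)},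
      d a ∈ Algebra.adjoin R
        {P : MvPolynomial (ℕ × Fin r) R | ∃ i ≤ n + 1, ∃ j : Fin r, P = MvPolynomial.X (i, j)})
    (hΨπ : (MvPolynomial.C π : MvPolynomial (ℕ × Fin r) R) ^ q +
      MvPolynomial.C π * d (MvPolynomial.C π) = MvPolynomial.C π)
    (hghost : ∀ n : ℕ, ∀ j : Fin r,
      (fun b : MvPolynomial (ℕ × Fin r) R => b ^ q + MvPolynomial.C π * d b)^[n]
          (MvPolynomial.X ((0 : ℕ), j)) =
        ∑ i ∈ Finset.range (n + 1),
          MvPolynomial.C π ^ i * MvPolynomial.X ((i : ℕ), j) ^ q ^ (n - i)) :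
    ∀ n : ℕ,
      AlgebraicIndependent R
        (fun P : Fin (n + 1) × Fin r => d^[(P.1 : ℕ)] (MvPolynomial.X ((0 : ℕ), P.2))) ∧
      Algebra.adjoin R
        (Set.range fun P : Fin (n + 1) × Fin r =>
          d^[(P.1 : ℕ)] (MvPolynomial.X ((0 : ℕ), P.2))) =
      Algebra.adjoin R
        {P : MvPolynomial (ℕ × Fin r) R | ∃ i ≤ n, ∃ j : Fin r, P = MvPolynomial.X (i, j)} := by
  intro n
  have hπreg : IsLeftRegular π := isLeftRegular_iff_right_eq_zero_of_mul.2 hπ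
  have hstep' := fun n => by simpa only [adjoin_X_le_eq_supported] using hstep n
  have hderivX := fun m j => piDeriv_X_sub_X_succ_mem_supported hπreg
    (Ψ := frobeniusLift (C π) q d hd1 hadd hmul) (fun _ => rfl) hΨπ hstep' (hghost · j) m
  have htri : IsUnitriangular Prod.fst fun p : ℕ × Fin r => d^[p.1] (X (0, p.2)) := by
    rintro ⟨_ | i, j⟩
    · simp
    · simpa [Nat.lt_succ_iff] using
        iterate_piDeriv_X_sub_X_mem_supported hπreg hadd hstep' hderivX j i
  have hrange : (Set.range fun P : Fin (n + 1) × Fin r => d^[(P.1 : ℕ)] (X (0, P.2))) =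
      (fun p : ℕ × Fin r => d^[p.1] (X (0, p.2))) '' {p | p.1 ≤ n} := by
    ext P
    constructor
    · rintro ⟨⟨i, j⟩, rfl⟩
      exact ⟨(i, j), Nat.lt_succ_iff.1 i.2, rfl⟩
    · rintro ⟨⟨i, j⟩, hi, rfl⟩
      exact ⟨(⟨i, Nat.lt_succ_of_le hi⟩, j), rfl⟩
  refine ⟨htri.algebraicIndependent.comp (Prod.map Fin.val id)
    (Fin.val_injective.prodMap Function.injective_id), ?_⟩
  rw [hrange, adjoin_X_le_eq_supported,
    htri.adjoin_image_eq_supported (s := {p | p.1 ≤ n}) fun _ hp _ hlt => hlt.le.trans hp]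

/-- Theorem A.2 (t.coord): for a prolongation structure `∂` on the polynomial ring
`B = R[x_{i,j}]` whose Frobenius lift `Ψ(b) = b^q + π·∂(b)` satisfies the ghost condition
`Ψ^n(x_{0,j}) = ∑_{i=0}^n π^i x_{i,j}^{q^{n-i}}`, the iterated `π`-derivatives
`∂^i(x_{0,j})`, `0 ≤ i ≤ n`, are algebraically independent over `R` and generate the
`R`-subalgebra `B_n` generated by the variables `x_{i,j}` with `i ≤ n`. -/
theorem stmt_1 {R : Type*} [CommRing R] (π : R)
    (hπ : ∀ a : R, π * a = 0 → a = 0)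
    (q r : ℕ) (hq : 2 ≤ q) (hr : 1 ≤ r)
    (d : MvPolynomial (ℕ × Fin r) R → MvPolynomial (ℕ × Fin r) R)
    (hd1 : d 1 = 0)
    (hdR : ∀ a ∈ Set.range (algebraMap R (MvPolynomial (ℕ × Fin r) R)),
      d a ∈ Set.range (algebraMap R (MvPolynomial (ℕ × Fin r) R)))
    (hadd : ∀ a b : MvPolynomial (ℕ × Fin r) R,
      MvPolynomial.C π * d (a + b) =
        MvPolynomial.C π * d a + MvPolynomial.C π * d b + (a ^ q + b ^ q - (a + b) ^ q))
    (hmul : ∀ a b : MvPolynomial (ℕ × Fin r) R,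
      d (a * b) = a ^ q * d b + b ^ q * d a + MvPolynomial.C π * d a * d b)
    (hstep : ∀ n : ℕ, ∀ a ∈ Algebra.adjoin R
        {P : MvPolynomial (ℕ × Fin r) R | ∃ i ≤ n, ∃ j : Fin r, P = MvPolynomial.X (i, j)},
      d a ∈ Algebra.adjoin R
        {P : MvPolynomial (ℕ × Fin r) R | ∃ i ≤ n + 1, ∃ j : Fin r, P = MvPolynomial.X (i, j)})
    (hΨπ : (MvPolynomial.C π : MvPolynomial (ℕ × Fin r) R) ^ q +
      MvPolynomial.C π * d (MvPolynomial.C π) = MvPolynomial.C π)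
    (hghost : ∀ n : ℕ, ∀ j : Fin r,
      (fun b : MvPolynomial (ℕ × Fin r) R => b ^ q + MvPolynomial.C π * d b)^[n]
          (MvPolynomial.X ((0 : ℕ), j)) =
        ∑ i ∈ Finset.range (n + 1),
          MvPolynomial.C π ^ i * MvPolynomial.X ((i : ℕ), j) ^ q ^ (n - i)) :
    ∀ n : ℕ,
      AlgebraicIndependent R
        (fun P : Fin (n + 1) × Fin r => d^[(P.1 : ℕ)] (MvPolynomial.X ((0 : ℕ), P.2))) ∧
      Algebra.adjoin R
        (Set.range fun P : Fin (n + 1) × Fin r =>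
          d^[(P.1 : ℕ)] (MvPolynomial.X ((0 : ℕ), P.2))) =
      Algebra.adjoin R
        {P : MvPolynomial (ℕ × Fin r) R | ∃ i ≤ n, ∃ j : Fin r, P = MvPolynomial.X (i, j)} :=
  stmt_1_general π hπ q r d hd1 hadd hmul hstep hΨπ hghost
end

section
/- Let A, C, D be commutative rings, u : A → C and ε : C → D ring homomorphisms, q ≥ 1 an integer, and π ∈ C. Let ∂ : A → C be a map with ∂(1) = 0 satisfying the π-Leibniz rule ∂(ab) = u(a)^q·∂(b) + u(b)^q·∂(a) + π·∂(a)·∂(b) for all a, b ∈ A. Let t_1, …, t_r ∈ A be elements with ε(u(t_l)) = 0 for all l, let c ∈ A, and let α_1, …, α_r ∈ ℕ with d := α_1 + ⋯ + α_r ≥ 1. Then ε(∂(c·t_1^{α_1}⋯t_r^{α_r})) = ε(u(c)^q + π·∂(c)) · ε(π)^{d−1} · ∏_{l=1}^r ε(∂(t_l))^{α_l}. -/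
private theorem aux_list {A C D : Type*} [CommRing A] [CommRing C] [CommRing D]
    (u : A →+* C) (ε : C →+* D) (q : ℕ) (hq : 1 ≤ q) (π : C)
    (d : A → C)
    (hleib : ∀ a b : A, d (a * b) = u a ^ q * d b + u b ^ q * d a + π * d a * d b)
    (L : List A) (hL : ∀ x ∈ L, ε (u x) = 0) :
    ∀ c : A, L ≠ [] →
      ε (d (c * L.prod)) =
        ε (u c ^ q + π * d c) * ε π ^ (L.length - 1) * (L.map fun x => ε (d x)).prod := by
  induction L with
  | nil => intro c h; exact absurd rfl h
  | cons x L ih =>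
    intro c _
    have hx : ε (u x) = 0 := hL x (by simp)
    have hq0 : q ≠ 0 := by omega
    rcases eq_or_ne L [] with hL0 | hL0
    · subst hL0
      simp only [List.prod_cons, List.prod_nil, mul_one, hleib, List.length_cons,
        List.length_nil, List.map_cons, List.map_nil]
      simp [map_add, map_mul, map_pow, hx, zero_pow hq0]
      ring
    · have key : c * (x :: L).prod = (c * x) * L.prod := by
        rw [List.prod_cons]; ring
      rw [key, ih (fun y hy => hL y (by simp [hy])) (c * x) hL0]
      have hlen : L.length - 1 + 1 = L.length :=
        Nat.succ_pred_eq_of_pos (List.length_pos_iff.mpr hL0)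
      have hcx : ε (u (c * x) ^ q + π * d (c * x)) =
          ε (u c ^ q + π * d c) * (ε π * ε (d x)) := by
        rw [hleib]
        simp [map_add, map_mul, map_pow, hx, zero_pow hq0]
        ring
      rw [hcx]
      simp only [List.length_cons, Nat.add_sub_cancel, List.map_cons, List.prod_cons]
      have h2 : ε π ^ L.length = ε π ^ (L.length - 1) * ε π := by
        conv_lhs => rw [← hlen]
        rw [pow_succ]
      rw [h2]; ring

/-- Computational core of Lemma 3.3 (l.N1Gfgrouplaw): evaluating the π-derivation of a
monomial `c · t₁^{α₁} ⋯ t_r^{α_r}` at a point where all `t_l` vanish. -/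
theorem stmt_2 {A C D : Type*} [CommRing A] [CommRing C] [CommRing D]
    (u : A →+* C) (ε : C →+* D) (q : ℕ) (hq : 1 ≤ q) (π : C)
    (d : A → C) (hd1 : d 1 = 0)
    (hleib : ∀ a b : A, d (a * b) = u a ^ q * d b + u b ^ q * d a + π * d a * d b)
    (r : ℕ) (t : Fin r → A) (ht : ∀ l, ε (u (t l)) = 0)
    (c : A) (α : Fin r → ℕ) (hα : 1 ≤ ∑ l, α l) :
    ε (d (c * ∏ l, t l ^ α l)) =
      ε (u c ^ q + π * d c) * ε π ^ (∑ l, α l - 1) * ∏ l, ε (d (t l)) ^ α l := by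
  set L : List A := (List.finRange r).flatMap (fun l => List.replicate (α l) (t l)) with hLdef
  have hprod : L.prod = ∏ l, t l ^ α l := by
    rw [hLdef, List.flatMap, List.prod_flatten, List.map_map, Fin.prod_univ_def]
    congr 1
    simp [Function.comp, List.prod_replicate]
  have hlen : L.length = ∑ l, α l := by
    rw [hLdef, List.length_flatMap, Fin.sum_univ_def]
    congr 1
    simp [Function.comp]
  have hmem : ∀ x ∈ L, ε (u x) = 0 := by
    intro x hx
    rw [hLdef, List.mem_flatMap] at hx
    obtain ⟨l, -, hl⟩ := hx
    rw [List.eq_of_mem_replicate hl]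
    exact ht l
  have hne : L ≠ [] := by
    intro h
    rw [h] at hlen
    simp at hlen
    omega
  have hmap : (L.map fun x => ε (d x)).prod = ∏ l, ε (d (t l)) ^ α l := by
    rw [hLdef, List.map_flatMap, List.flatMap, List.prod_flatten, List.map_map,
      Fin.prod_univ_def]
    congr 1
    simp [Function.comp, List.map_replicate, List.prod_replicate]
  rw [← hprod, aux_list u ε q hq π d hleib L hmem c hne, hlen, hmap]
end

section
/- Let p be a prime, n ≥ 1, and let B be a commutative ring that is p-adically complete and separated (i.e., the canonical map B → lim_m B/p^m B is an isomorphism). Then the ring of truncated p-typical Witt vectors of length n, TruncatedWittVector p n B, is also p-adically complete and separated. -/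
/-!
In `W(B)`, divisibility by powers of `p` and coefficientwise divisibility by powers of `p` are
comparable: if `p^s ∣ x - y` then `p^(s-i) ∣ x_i - y_i`, and conversely a Witt vector whose
coefficients are all divisible by `p^(m+1)` is divisible by `p^m`. Both are checked on universal
Witt vectors over polynomial rings over `ℤ`, where `p` is a non-zero-divisor and the ghost
components determine the coefficients. Passing to `W_n(B)`, the `p`-adic filtration and the
coefficientwise `p`-adic filtration define the same topology, so `W_n(B)` inherits completeness and
separatedness from `B` coefficient by coefficient.
-/

open Finset MvPolynomial

theorem sModEq_span_singleton_pow_iff {R : Type*} [CommRing R] {r a b : R} {k : ℕ} :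
    a ≡ b [SMOD (Ideal.span {r} ^ k • ⊤ : Submodule R R)] ↔ r ^ k ∣ a - b := by
  rw [SModEq.sub_mem, smul_eq_mul, Ideal.mul_top, Ideal.span_singleton_pow,
    Ideal.mem_span_singleton]

namespace WittVector

variable {p : ℕ} [hp : Fact p.Prime] {R : Type*} [CommRing R]

local notation "𝕎" => WittVector p

theorem ghostComponent_eq_sum (i : ℕ) (x : 𝕎 R) :
    ghostComponent i x = ∑ j ∈ range (i + 1), (p : R) ^ j * x.coeff j ^ p ^ (i - j) := by
  simp [ghostComponent_apply, wittPolynomial, aeval_monomial]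

theorem ghostComponent_map {S : Type*} [CommRing S] (f : R →+* S) (i : ℕ) (x : 𝕎 R) :
    ghostComponent i (map f x) = f (ghostComponent i x) := by
  simp [ghostComponent_eq_sum, map_coeff]

theorem isUnit_natCast_of_isUnit (h : IsUnit (p : R)) : IsUnit (p : 𝕎 R) := by
  let := h.invertible
  simpa using (Pi.isUnit_iff.mpr fun _ => h : IsUnit (p : ℕ → R)).map (ghostEquiv p R).symm

theorem pow_dvd_coeff_sub_of_pow_dvd_ghostComponent_sub [IsDomain R] [CharZero R] {x y : 𝕎 R}
    {s : ℕ} (h : ∀ i, (p : R) ^ s ∣ ghostComponent i x - ghostComponent i y) (i : ℕ) :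
    (p : R) ^ (s - i) ∣ x.coeff i - y.coeff i := by
  induction i using Nat.strong_induction_on with
  | _ i ih =>
  rcases lt_or_ge s i with hsi | his
  · simp [Nat.sub_eq_zero_of_le hsi.le]
  have hlower : (p : R) ^ s ∣
      ∑ j ∈ range i, (p : R) ^ j * (x.coeff j ^ p ^ (i - j) - y.coeff j ^ p ^ (i - j)) := by
    refine dvd_sum fun j hj => ?_
    have hji := mem_range.mp hj
    calc (p : R) ^ s = p ^ j * p ^ (s - j) := by rw [← pow_add]; congr 1; omega
      _ ∣ _ := mul_dvd_mul_left _ ((ih j hji).trans (sub_dvd_pow_sub_pow _ _ _))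
  have htop : (p : R) ^ i * p ^ (s - i) ∣ p ^ i * (x.coeff i - y.coeff i) := by
    have hsplit : (p : R) ^ i * (x.coeff i - y.coeff i) = (ghostComponent i x - ghostComponent i y)
        - ∑ j ∈ range i, (p : R) ^ j * (x.coeff j ^ p ^ (i - j) - y.coeff j ^ p ^ (i - j)) := by
      simp only [ghostComponent_eq_sum, sum_range_succ, mul_sub, sum_sub_distrib, Nat.sub_self,
        pow_zero, pow_one]
      ring
    rw [← pow_add, Nat.add_sub_cancel' his, hsplit]
    exact dvd_sub (h i) hlower
  exact (mul_dvd_mul_iff_left (pow_ne_zero _ (Nat.cast_ne_zero.mpr hp.out.ne_zero))).mp htop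

theorem pow_dvd_coeff_sub_of_pow_dvd_sub {x y : 𝕎 R} {s : ℕ} (h : (p : 𝕎 R) ^ s ∣ x - y)
    (i : ℕ) : (p : R) ^ (s - i) ∣ x.coeff i - y.coeff i := by
  obtain ⟨c, hc⟩ := h
  let f : MvPolynomial (ℕ ⊕ ℕ) ℤ →+* R := (aeval (Sum.elim y.coeff c.coeff)).toRingHom
  let yU : 𝕎 (MvPolynomial (ℕ ⊕ ℕ) ℤ) := mk p fun j => X (Sum.inl j)
  let cU : 𝕎 (MvPolynomial (ℕ ⊕ ℕ) ℤ) := mk p fun j => X (Sum.inr j)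
  let xU : 𝕎 (MvPolynomial (ℕ ⊕ ℕ) ℤ) := yU + p ^ s * cU
  have hyU : map f yU = y := by ext j; simp [f, yU, map_coeff]
  have hxU : map f xU = x := by
    have hcU : map f cU = c := by ext j; simp [f, cU, map_coeff]
    rw [map_add, map_mul, map_pow, map_natCast, hyU, hcU, ← hc, add_sub_cancel]
  obtain ⟨d, hd⟩ := pow_dvd_coeff_sub_of_pow_dvd_ghostComponent_sub (x := xU) (y := yU) (s := s)
    (fun j => ⟨ghostComponent j cU, by simp [xU]⟩) i
  refine ⟨f d, ?_⟩
  rw [← hxU, ← hyU, map_coeff, map_coeff, ← map_sub, hd, map_mul, map_pow, map_natCast]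

theorem pow_add_dvd_pow_mul_pow_mul_pow {r i j : ℕ} (hr : 1 ≤ r) (hj : j ≤ i) (a : R) :
    (p : R) ^ (r + i) ∣ p ^ j * (p ^ r * a) ^ p ^ (i - j) := by
  rw [mul_pow, ← pow_mul, ← mul_assoc, ← pow_add]
  refine (pow_dvd_pow _ ?_).mul_right _
  have hlt : r * (i - j + 1) ≤ r * p ^ (i - j) :=
    Nat.mul_le_mul_left r (Nat.lt_pow_self hp.out.one_lt)
  have hle : i - j ≤ r * (i - j) := Nat.le_mul_of_pos_left _ hr
  rw [Nat.mul_succ] at hlt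
  omega

theorem pow_add_dvd_ghostComponent_mk_pow_mul {r : ℕ} (hr : 1 ≤ r) (a : ℕ → R) (i : ℕ) :
    (p : R) ^ (r + i) ∣ ghostComponent i (mk p fun j => p ^ r * a j) := by
  rw [ghostComponent_eq_sum]
  exact dvd_sum fun j hj =>
    pow_add_dvd_pow_mul_pow_mul_pow hr (Nat.lt_succ_iff.mp (mem_range.mp hj)) (a j)

/-- Comparing `i`-th ghost components, `p^(m+i) y_i` is the ghost component of the right hand
side minus `p^m ∑_{j<i} p^j y_j^(p^(i-j))`, and by induction both terms are `p^(m+i+1)` times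
an element of the image of `ι`. -/
theorem exists_coeff_eq_map_mul_of_pow_mul_eq_map {K : Type*} [CommRing K] [IsDomain K]
    [CharZero K] (ι : R →+* K) {m : ℕ} (a : ℕ → R) {y : 𝕎 K}
    (hy : (p : 𝕎 K) ^ m * y = map ι (mk p fun j => p ^ (m + 1) * a j)) (i : ℕ) :
    ∃ c : R, y.coeff i = ι (p * c) := by
  induction i using Nat.strong_induction_on with
  | _ i ih =>
  choose! c hc using ih
  obtain ⟨A, hA⟩ :=
    pow_add_dvd_ghostComponent_mk_pow_mul (p := p) (Nat.le_add_left 1 m) a i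
  obtain ⟨B, hB⟩ :
      (p : R) ^ (1 + i) ∣ ∑ j ∈ range i, (p : R) ^ j * (p ^ 1 * c j) ^ p ^ (i - j) :=
    dvd_sum fun j hj => pow_add_dvd_pow_mul_pow_mul_pow le_rfl (mem_range.mp hj).le (c j)
  have hlower :
      ∑ j ∈ range i, (p : K) ^ j * y.coeff j ^ p ^ (i - j) = ι (p ^ (1 + i) * B) := by
    rw [← hB, map_sum]
    refine sum_congr rfl fun j hj => ?_
    simp [hc j (mem_range.mp hj)]
  have hghost := congrArg (ghostComponent i) hy
  rw [map_mul, map_pow, map_natCast, ghostComponent_map, hA, ghostComponent_eq_sum,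
    sum_range_succ, hlower, Nat.sub_self, pow_zero, pow_one] at hghost
  refine ⟨A - B,
    mul_left_cancel₀ (pow_ne_zero (m + i) (Nat.cast_ne_zero.mpr hp.out.ne_zero)) ?_⟩
  simp only [map_mul, map_pow, map_natCast, map_sub] at hghost ⊢
  linear_combination hghost

theorem pow_dvd_mk_pow_succ_mul_X (m : ℕ) :
    (p : 𝕎 (MvPolynomial ℕ ℤ)) ^ m ∣
      mk p fun j => p ^ (m + 1) * (X j : MvPolynomial ℕ ℤ) := by
  let ι : MvPolynomial ℕ ℤ →+* MvPolynomial ℕ ℚ := MvPolynomial.map (Int.castRingHom ℚ)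
  have hpQ : IsUnit (p : MvPolynomial ℕ ℚ) := by
    simpa using (isUnit_iff_ne_zero.mpr (Nat.cast_ne_zero.mpr hp.out.ne_zero) :
      IsUnit (p : ℚ)).map (algebraMap ℚ (MvPolynomial ℕ ℚ))
  obtain ⟨u, hu⟩ := isUnit_natCast_of_isUnit hpQ
  set x := map ι (mk p fun j => p ^ (m + 1) * (X j : MvPolynomial ℕ ℤ))
  have hy : (p : 𝕎 (MvPolynomial ℕ ℚ)) ^ m * ((↑u⁻¹) ^ m * x) = x := by
    rw [← hu, ← mul_assoc, ← mul_pow, Units.mul_inv, one_pow, one_mul]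
  choose c hc using exists_coeff_eq_map_mul_of_pow_mul_eq_map ι (fun j => X j) hy
  refine ⟨mk p fun j => p * c j,
    map_injective ι (MvPolynomial.map_injective _ Int.cast_injective) ?_⟩
  rw [map_mul, map_pow, map_natCast]
  convert hy.symm using 2
  ext j
  simp [hc, map_coeff]

theorem pow_dvd_of_pow_succ_dvd_coeff {m : ℕ} {x : 𝕎 R}
    (hx : ∀ i, (p : R) ^ (m + 1) ∣ x.coeff i) : (p : 𝕎 R) ^ m ∣ x := by
  choose a ha using hx
  have hxU : x = map (aeval a).toRingHom
      (mk p fun j => p ^ (m + 1) * (X j : MvPolynomial ℕ ℤ)) := by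
    ext j
    simp [ha, map_coeff]
  rw [hxU]
  simpa using map_dvd (map (aeval a).toRingHom) (pow_dvd_mk_pow_succ_mul_X (p := p) m)

end WittVector

namespace TruncatedWittVector

variable {p n : ℕ} [Fact p.Prime] {R : Type*} [CommRing R]

theorem pow_dvd_coeff_sub_of_pow_dvd_sub {x y : TruncatedWittVector p n R} {k : ℕ}
    (h : (p : TruncatedWittVector p n R) ^ (k + n) ∣ x - y) (i : Fin n) :
    (p : R) ^ k ∣ x.coeff i - y.coeff i := by
  obtain ⟨c, hc⟩ := h
  obtain ⟨y, rfl⟩ := WittVector.truncate_surjective (p := p) n R y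
  obtain ⟨c, rfl⟩ := WittVector.truncate_surjective (p := p) n R c
  have hx : x = WittVector.truncate n (y + (p : WittVector p R) ^ (k + n) * c) := by
    rw [map_add, map_mul, map_pow, map_natCast, ← hc, add_sub_cancel]
  rw [hx, WittVector.coeff_truncate, WittVector.coeff_truncate]
  exact (pow_dvd_pow _ (by omega)).trans
    (WittVector.pow_dvd_coeff_sub_of_pow_dvd_sub ⟨c, add_sub_cancel_left _ _⟩ i)

theorem pow_dvd_of_pow_succ_dvd_coeff {m : ℕ} {x : TruncatedWittVector p n R}
    (hx : ∀ i, (p : R) ^ (m + 1) ∣ x.coeff i) : (p : TruncatedWittVector p n R) ^ m ∣ x := by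
  have hout : ∀ i, (p : R) ^ (m + 1) ∣ x.out.coeff i := fun i => by
    simp only [out]
    split_ifs
    exacts [hx _, dvd_zero _]
  obtain ⟨y, hy⟩ := WittVector.pow_dvd_of_pow_succ_dvd_coeff hout
  refine ⟨WittVector.truncate n y, ?_⟩
  rw [← map_natCast (WittVector.truncate n), ← map_pow, ← map_mul, ← hy]
  exact (truncateFun_out x).symm

theorem coeff_sub_mem {I : Ideal R} {x y : TruncatedWittVector p n R}
    (h : ∀ i, x.coeff i - y.coeff i ∈ I) (i : Fin n) : (x - y).coeff i ∈ I := by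
  obtain ⟨x, rfl⟩ := WittVector.truncate_surjective (p := p) n R x
  obtain ⟨y, rfl⟩ := WittVector.truncate_surjective (p := p) n R y
  set π := WittVector.map (p := p) (Ideal.Quotient.mk I)
  have htrunc : WittVector.truncate n (π x) = WittVector.truncate n (π y) :=
    ext fun j => by simpa [π, WittVector.map_coeff, Ideal.Quotient.eq] using h j
  rw [← map_sub, WittVector.coeff_truncate, ← Ideal.Quotient.eq_zero_iff_mem,
    ← WittVector.map_coeff, ← WittVector.coeff_truncate _ i, map_sub, map_sub, htrunc, sub_self]
  exact coeff_zero p n _ i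

theorem pow_dvd_sub_of_pow_succ_dvd_coeff_sub {m : ℕ} {x y : TruncatedWittVector p n R}
    (h : ∀ i, (p : R) ^ (m + 1) ∣ x.coeff i - y.coeff i) :
    (p : TruncatedWittVector p n R) ^ m ∣ x - y :=
  pow_dvd_of_pow_succ_dvd_coeff fun i => Ideal.mem_span_singleton.mp <|
    coeff_sub_mem (fun j => Ideal.mem_span_singleton.mpr (h j)) i

instance isHausdorff [hR : IsHausdorff (Ideal.span {(p : R)}) R] :
    IsHausdorff (Ideal.span {(p : TruncatedWittVector p n R)}) (TruncatedWittVector p n R) := by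
  refine ⟨fun x hx => ext fun i => ?_⟩
  rw [coeff_zero]
  refine hR.haus _ fun k => sModEq_span_singleton_pow_iff.mpr ?_
  simpa using pow_dvd_coeff_sub_of_pow_dvd_sub (sModEq_span_singleton_pow_iff.mp (hx (k + n))) i

instance isPrecomplete [hR : IsPrecomplete (Ideal.span {(p : R)}) R] :
    IsPrecomplete (Ideal.span {(p : TruncatedWittVector p n R)}) (TruncatedWittVector p n R) := by
  refine ⟨fun f hf => ?_⟩
  have hcoeff (i : Fin n) : ∃ L : R, ∀ k,
      (f (k + n)).coeff i ≡ L [SMOD (Ideal.span {(p : R)} ^ k • ⊤ : Submodule R R)] :=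
    hR.prec fun hkl => sModEq_span_singleton_pow_iff.mpr <| pow_dvd_coeff_sub_of_pow_dvd_sub
      (sModEq_span_singleton_pow_iff.mp (hf (Nat.add_le_add_right hkl n))) i
  choose L hL using hcoeff
  refine ⟨mk p L, fun m => sModEq_span_singleton_pow_iff.mpr ?_⟩
  have hcauchy : (p : TruncatedWittVector p n R) ^ m ∣ f m - f (m + 1 + n) :=
    sModEq_span_singleton_pow_iff.mp (hf (by omega))
  have hlimit : (p : TruncatedWittVector p n R) ^ m ∣ f (m + 1 + n) - mk p L :=
    pow_dvd_sub_of_pow_succ_dvd_coeff_sub fun i => by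
      simpa [coeff_mk] using sModEq_span_singleton_pow_iff.mp (hL i (m + 1))
  simpa using dvd_add hcauchy hlimit

end TruncatedWittVector

theorem stmt_8_general (p : ℕ) [hp : Fact p.Prime] (n : ℕ)
    {B : Type*} [CommRing B]
    (hB : IsAdicComplete (Ideal.span {(p : B)}) B) :
    IsAdicComplete (Ideal.span {(p : TruncatedWittVector p n B)})
      (TruncatedWittVector p n B) :=
  { toIsHausdorff := TruncatedWittVector.isHausdorff,
    toIsPrecomplete := TruncatedWittVector.isPrecomplete }

/-- Remark 2.1 (r.piadicW), unramified p-typical case: if `B` is `p`-adically complete and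
separated then so is the ring of truncated Witt vectors of length `n`. -/
theorem stmt_8 (p : ℕ) [hp : Fact p.Prime] (n : ℕ) (hn : 1 ≤ n)
    {B : Type*} [CommRing B]
    (hB : IsAdicComplete (Ideal.span {(p : B)}) B) :
    IsAdicComplete (Ideal.span {(p : TruncatedWittVector p n B)})
      (TruncatedWittVector p n B) :=
  stmt_8_general p (hp := hp) n hB
end
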